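/- arXiv:1002.0628 — 2 statements merged into one kernel-verified Lean document; each statement's English description precedes it below -/
import Mathlib

section
/- Let 𝒞 = (V,ℛ) be a coherent configuration, X,Y fibers of 𝒞, S ∈ ℛ_{X,Y}, and L_S := {R ∈ ℛ_X : RS = {S}} (complex product). Then d_{L_S} := Σ_{R ∈ L_S} d_R divides gcd(|X|, e_S). -/
open scoped Classical

namespace CCPaper

variable {V : Type*}

/-- The diagonal relation `Δ_X = {(x,x) : x ∈ X}` on a subset `X ⊆ V`. -/
def diag (X : Set V) : Set (V × V) := {p : V × V | p.1 ∈ X ∧ p.1 = p.2}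

/-- The transpose `R^t = {(v,u) : (u,v) ∈ R}` of a relation. -/
def transp (R : Set (V × V)) : Set (V × V) := Prod.swap ⁻¹' R

/-- The intersection number `|{w : (p.1,w) ∈ R, (w,p.2) ∈ S}|` at a pair `p`. -/
noncomputable def iNum (R S : Set (V × V)) (p : V × V) : ℕ :=
  Nat.card {w : V | (p.1, w) ∈ R ∧ (w, p.2) ∈ S}

/-- `ℛ` is a coherent configuration (scheme) on the finite set `V`:
(C1) `ℛ` consists of nonempty relations partitioning `V × V`;
(C2) the diagonal is a union of relations of `ℛ`;
(C3) `ℛ` is closed under transposition;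
(C4) intersection numbers are constant on each relation of `ℛ`. -/
def IsCC [Fintype V] (ℛ : Set (Set (V × V))) : Prop :=
  (∀ R ∈ ℛ, R.Nonempty) ∧
  (∀ p : V × V, ∃! R, R ∈ ℛ ∧ p ∈ R) ∧
  (∀ R ∈ ℛ, (∃ p ∈ R, p.1 = p.2) → ∀ p ∈ R, p.1 = p.2) ∧
  (∀ R ∈ ℛ, transp R ∈ ℛ) ∧
  (∀ R ∈ ℛ, ∀ S ∈ ℛ, ∀ T ∈ ℛ, ∀ p ∈ T, ∀ q ∈ T, iNum R S p = iNum R S q)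

/-- A fiber of the configuration: a nonempty `X ⊆ V` with `Δ_X ∈ ℛ`. -/
def IsFiber [Fintype V] (ℛ : Set (Set (V × V))) (X : Set V) : Prop :=
  X.Nonempty ∧ diag X ∈ ℛ

/-- `ℛ_{X,Y}`, the set of basis relations contained in `X × Y`. -/
def relsBtw [Fintype V] (ℛ : Set (Set (V × V))) (X Y : Set V) : Set (Set (V × V)) :=
  {R | R ∈ ℛ ∧ R ⊆ X ×ˢ Y}

/-- Out-degree `d_R = |R_out(x)|` (computed at a chosen point of `R`;
for a basis relation of a scheme this is independent of the point). -/
noncomputable def outDeg (R : Set (V × V)) : ℕ :=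
  if h : R.Nonempty then Nat.card {y : V | (h.choose.1, y) ∈ R} else 0

/-- In-degree `e_R = |R_in(y)|` (computed at a chosen point of `R`). -/
noncomputable def inDeg (R : Set (V × V)) : ℕ :=
  if h : R.Nonempty then Nat.card {x : V | (x, h.choose.2) ∈ R} else 0

/-- The structure constant `c_{RS}^T` (computed at a chosen pair of `T`). -/
noncomputable def sConst (R S T : Set (V × V)) : ℕ :=
  if h : T.Nonempty then iNum R S h.choose else 0

/-- The complex product `RS = {T ∈ ℛ : c_{RS}^T > 0}`. -/
def cProd [Fintype V] (ℛ : Set (Set (V × V))) (R S : Set (V × V)) : Set (Set (V × V)) :=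
  {T | T ∈ ℛ ∧ 0 < sConst R S T}

/-- A relation is thin if `d_R = e_R = 1`. -/
def IsThin (R : Set (V × V)) : Prop := outDeg R = 1 ∧ inDeg R = 1

/-- `ℛ` is `r`-balanced: `|ℛ_{X,Y}| = r` for all fibers `X, Y`. -/
def IsBalancedWith [Fintype V] (ℛ : Set (Set (V × V))) (r : ℕ) : Prop :=
  ∀ X Y : Set V, IsFiber ℛ X → IsFiber ℛ Y → Nat.card (relsBtw ℛ X Y) = r

/-- `ℛ` is balanced: `|ℛ_{X,Y}|` is the same for all pairs of fibers. -/
def IsBalanced [Fintype V] (ℛ : Set (Set (V × V))) : Prop := ∃ r : ℕ, IsBalancedWith ℛ r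

/-- An `(m,n,r)`-scheme: a coherent configuration which is `r`-balanced, all of whose
fibers have size `m`, and which has exactly `n` fibers. -/
def IsMNRScheme [Fintype V] (ℛ : Set (Set (V × V))) (m n r : ℕ) : Prop :=
  IsCC ℛ ∧ IsBalancedWith ℛ r ∧ (∀ X : Set V, IsFiber ℛ X → Nat.card X = m) ∧
    Nat.card {X : Set V | IsFiber ℛ X} = n

/-- A scheme is reduced if no basis relation between distinct fibers is thin. -/
def IsReduced [Fintype V] (ℛ : Set (Set (V × V))) : Prop :=
  ∀ X Y : Set V, IsFiber ℛ X → IsFiber ℛ Y → X ≠ Y → ∀ R ∈ relsBtw ℛ X Y, ¬ IsThin R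

/-- A (possibly empty) union of fibers. -/
def IsFiberUnion [Fintype V] (ℛ : Set (Set (V × V))) (U : Set V) : Prop :=
  ∃ F : Set (Set V), (∀ X ∈ F, IsFiber ℛ X) ∧ U = ⋃₀ F

/-- The adjacency matrix of a relation. -/
noncomputable def adjMat [Fintype V] (R : Set (V × V)) : Matrix V V ℂ :=
  fun u v => if (u, v) ∈ R then 1 else 0

/-- The diagonal idempotent `I_X` of a subset `X ⊆ V`. -/
noncomputable def idMat [Fintype V] (X : Set V) : Matrix V V ℂ :=
  fun u v => if u = v ∧ u ∈ X then 1 else 0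

/-- The adjacency algebra `𝒜(𝒞)`, the subalgebra of `Mat_V(ℂ)` spanned by the
adjacency matrices of the basis relations. -/
noncomputable def adjAlg [Fintype V] [DecidableEq V] (ℛ : Set (Set (V × V))) :
    Subalgebra ℂ (Matrix V V ℂ) :=
  Algebra.adjoin ℂ (adjMat '' ℛ)

/-- `P` is a central primitive idempotent of the (multiplicatively closed) set of
matrices `S`: `P ∈ S` is a nonzero idempotent commuting with everything in `S`, which is
not the sum of two nonzero orthogonal central idempotents of `S`. -/
def IsCPIin [Fintype V] (S : Set (Matrix V V ℂ)) (P : Matrix V V ℂ) : Prop :=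
  P ∈ S ∧ P ≠ 0 ∧ P * P = P ∧ (∀ Q ∈ S, P * Q = Q * P) ∧
  ∀ Q₁ Q₂ : Matrix V V ℂ, Q₁ ∈ S → Q₂ ∈ S →
    Q₁ * Q₁ = Q₁ → Q₂ * Q₂ = Q₂ →
    (∀ M ∈ S, Q₁ * M = M * Q₁) → (∀ M ∈ S, Q₂ * M = M * Q₂) →
    Q₁ * Q₂ = 0 → Q₂ * Q₁ = 0 → P = Q₁ + Q₂ → Q₁ = 0 ∨ Q₂ = 0

/-- `𝒫(𝒞)`: the set of central primitive idempotents of the adjacency algebra. -/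
def CPIs [Fintype V] [DecidableEq V] (ℛ : Set (Set (V × V))) : Set (Matrix V V ℂ) :=
  {P | IsCPIin (adjAlg ℛ : Set (Matrix V V ℂ)) P}

/-- The adjacency algebra `I_X · 𝒜(𝒞) · I_X` of the homogeneous component `𝒞_X`,
as a subset of `Mat_V(ℂ)`. -/
def compAlgSet [Fintype V] [DecidableEq V] (ℛ : Set (Set (V × V))) (X : Set V) :
    Set (Matrix V V ℂ) :=
  {M | ∃ N ∈ adjAlg ℛ, M = idMat X * N * idMat X}

/-- `𝒫(𝒞_X)`: the central primitive idempotents of the homogeneous component `𝒞_X`. -/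
def CPIsComp [Fintype V] [DecidableEq V] (ℛ : Set (Set (V × V))) (X : Set V) :
    Set (Matrix V V ℂ) :=
  {P | IsCPIin (compAlgSet ℛ X) P}

/-- The degree `n_P` of a central primitive idempotent `P` of the algebra (given as the
set `S`): the positive integer with `n_P ^ 2 = dim_ℂ (S · P)`. -/
noncomputable def degOf [Fintype V] [DecidableEq V] (S : Set (Matrix V V ℂ))
    (P : Matrix V V ℂ) : ℕ :=
  Nat.sqrt (Module.finrank ℂ
    (Submodule.span ℂ {M : Matrix V V ℂ | ∃ a ∈ S, M = a * P}))

/-!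
For `R ∈ ℛ_X`, the relation `R ○ S` is the union of the complex product `RS`, so `RS = {S}` means
`R ○ S = S`; as all points of `X` have equally many `S`-neighbours, this says that `u` and `v`
have the same `S`-neighbours whenever `(u, v) ∈ R`. Hence `L_S` contains `Δ_X`, is closed under
transposition and, by (C4), under products, so `⋃ L_S` is an equivalence relation on `X`. Its
class through `x` is the disjoint union of the `R(x)`, `R ∈ L_S`, of size `d_{L_S}`, and both `X`
and the `S`-in-neighbourhood of a point are unions of classes.
-/

open SetRel Finset

section

variable [Fintype V] {ℛ : Set (Set (V × V))} {R S T : Set (V × V)} {X Y : Set V}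

lemma natCard_setOf_eq_card (p : V → Prop) : Nat.card {y | p y} = #{y | p y} :=
  Nat.subtype_card _ fun _ => by simp

lemma iNum_pos_iff {p : V × V} : 0 < iNum R S p ↔ p ∈ R ○ S := by
  obtain ⟨a, c⟩ := p
  simp [iNum, Finset.filter_nonempty_iff]

lemma exists_inDeg_eq_card (h : R.Nonempty) : ∃ y, inDeg R = #{x | (x, y) ∈ R} :=
  ⟨h.choose.2, by rw [inDeg, dif_pos h, natCard_setOf_eq_card]⟩

lemma dvd_card_of_card_fiber_eq {α β : Type*} [DecidableEq β] {s : Finset α} (f : α → β)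
    {d : ℕ} (h : ∀ x ∈ s, #{y ∈ s | f y = f x} = d) : d ∣ #s := by
  rw [card_eq_sum_card_image f s]
  refine dvd_sum fun b hb => ?_
  obtain ⟨x, hx, rfl⟩ := mem_image.1 hb
  rw [h x hx]

namespace IsCC

theorem nonempty (hCC : IsCC ℛ) (hR : R ∈ ℛ) : R.Nonempty := hCC.1 R hR

theorem transp_mem (hCC : IsCC ℛ) (hR : R ∈ ℛ) : transp R ∈ ℛ := hCC.2.2.2.1 R hR

theorem exists_mem (hCC : IsCC ℛ) (p : V × V) : ∃ T ∈ ℛ, p ∈ T := (hCC.2.1 p).exists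

theorem eq_iff_mem (hCC : IsCC ℛ) (hT : T ∈ ℛ) (hS : S ∈ ℛ) {p : V × V} (hp : p ∈ T) :
    T = S ↔ p ∈ S :=
  ⟨fun h => h ▸ hp, fun h => (hCC.2.1 p).unique ⟨hT, hp⟩ ⟨hS, h⟩⟩

theorem mem_comp_of_mem (hCC : IsCC ℛ) (hR : R ∈ ℛ) (hS : S ∈ ℛ) (hT : T ∈ ℛ) {p q : V × V}
    (hp : p ∈ T) (hq : q ∈ T) (h : p ∈ R ○ S) : q ∈ R ○ S := by
  rw [← iNum_pos_iff] at h ⊢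
  rwa [hCC.2.2.2.2 R hR S hS T hT q hq p hp]

theorem mem_cProd_iff (hCC : IsCC ℛ) (hR : R ∈ ℛ) (hS : S ∈ ℛ) {p : V × V} (hp : p ∈ T) :
    T ∈ cProd ℛ R S ↔ T ∈ ℛ ∧ p ∈ R ○ S := by
  have hT : T.Nonempty := ⟨p, hp⟩
  refine and_congr_right fun hTℛ => ?_
  rw [sConst, dif_pos hT, iNum_pos_iff]
  exact ⟨hCC.mem_comp_of_mem hR hS hTℛ hT.choose_spec hp,
    hCC.mem_comp_of_mem hR hS hTℛ hp hT.choose_spec⟩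

theorem cProd_eq_singleton_iff (hCC : IsCC ℛ) (hR : R ∈ ℛ) (hS : S ∈ ℛ) :
    cProd ℛ R S = {S} ↔ R ○ S = S := by
  constructor
  · intro h
    ext p
    obtain ⟨T, hT, hp⟩ := hCC.exists_mem p
    rw [← hCC.eq_iff_mem hT hS hp, ← Set.mem_singleton_iff, ← h, hCC.mem_cProd_iff hR hS hp]
    exact (and_iff_right hT).symm
  · intro h
    ext T
    rw [Set.mem_singleton_iff]
    by_cases hT : T ∈ ℛ
    · obtain ⟨p, hp⟩ := hCC.nonempty hT
      rw [hCC.mem_cProd_iff hR hS hp, h, hCC.eq_iff_mem hT hS hp, and_iff_right hT]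
    · exact iff_of_false (fun h' => hT h'.1) (by rintro rfl; exact hT hS)

theorem subset_prod_of_mem (hCC : IsCC ℛ) (hX : IsFiber ℛ X) (hY : IsFiber ℛ Y) (hR : R ∈ ℛ)
    {u v : V} (huv : (u, v) ∈ R) (hu : u ∈ X) (hv : v ∈ Y) : R ⊆ X ×ˢ Y := by
  rintro ⟨a, b⟩ hab
  obtain ⟨a', ⟨ha, -⟩, -⟩ :=
    hCC.mem_comp_of_mem hX.2 hR hR huv hab (prodMk_mem_comp (b := u) ⟨hu, rfl⟩ huv)
  obtain ⟨b', -, hb', hbb'⟩ :=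
    hCC.mem_comp_of_mem hR hY.2 hR huv hab (prodMk_mem_comp (b := v) huv ⟨hv, rfl⟩)
  exact ⟨ha, hbb' ▸ hb'⟩

theorem card_outNbr_eq (hCC : IsCC ℛ) (hX : IsFiber ℛ X) (hR : R ∈ ℛ) {u v : V} (hu : u ∈ X)
    (hv : v ∈ X) : #{y | (u, y) ∈ R} = #{y | (v, y) ∈ R} := by
  have key : ∀ w, iNum R (transp R) (w, w) = #{y | (w, y) ∈ R} := fun w => by
    simp only [iNum, transp, Set.mem_preimage, Prod.swap_prod_mk, and_self]
    exact natCard_setOf_eq_card _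
  rw [← key, ← key]
  exact hCC.2.2.2.2 R hR _ (hCC.transp_mem hR) _ hX.2 _ ⟨hu, rfl⟩ _ ⟨hv, rfl⟩

theorem exists_mem_of_mem_fiber (hCC : IsCC ℛ) (hX : IsFiber ℛ X) (hR : R ∈ relsBtw ℛ X Y)
    {x : V} (hx : x ∈ X) : ∃ y, (x, y) ∈ R := by
  obtain ⟨⟨a, b⟩, hab⟩ := hCC.nonempty hR.1
  have hpos : 0 < #{y | (a, y) ∈ R} := card_pos.2 ⟨b, by simpa using hab⟩
  rw [hCC.card_outNbr_eq hX hR.1 (hR.2 hab).1 hx] at hpos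
  obtain ⟨y, hy⟩ := card_pos.1 hpos
  exact ⟨y, by simpa using hy⟩

theorem outDeg_eq_card (hCC : IsCC ℛ) (hX : IsFiber ℛ X) (hR : R ∈ relsBtw ℛ X Y) {x : V}
    (hx : x ∈ X) : outDeg R = #{y | (x, y) ∈ R} := by
  have hne := hCC.nonempty hR.1
  rw [outDeg, dif_pos hne, natCard_setOf_eq_card]
  exact hCC.card_outNbr_eq hX hR.1 (hR.2 hne.choose_spec).1 hx

theorem comp_eq_self_iff (hCC : IsCC ℛ) (hX : IsFiber ℛ X) (hR : R ∈ relsBtw ℛ X X)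
    (hS : S ∈ relsBtw ℛ X Y) :
    R ○ S = S ↔ ∀ u v, (u, v) ∈ R → ∀ y, (u, y) ∈ S ↔ (v, y) ∈ S := by
  constructor
  · intro h u v huv
    have hsub : ({y | (v, y) ∈ S} : Finset V) ⊆ ({y | (u, y) ∈ S} : Finset V) := fun y hy => by
      simp only [mem_filter_univ] at hy ⊢
      exact h ▸ prodMk_mem_comp huv hy
    have hcard := hCC.card_outNbr_eq hX hS.1 (hR.2 huv).1 (hR.2 huv).2
    have heq := eq_of_subset_of_card_le hsub hcard.le
    intro y
    simpa using congrArg (y ∈ ·) heq.symm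
  · intro h
    ext ⟨a, b⟩
    refine ⟨fun ⟨w, haw, hwb⟩ => (h a w haw b).2 hwb, fun hab => ?_⟩
    obtain ⟨w, haw⟩ := hCC.exists_mem_of_mem_fiber hX hR (hS.2 hab).1
    exact ⟨w, haw, (h a w haw b).1 hab⟩

end IsCC

/-- The set `L_S` of the paper. -/
def stabRels (ℛ : Set (Set (V × V))) (X : Set V) (S : Set (V × V)) : Set (Set (V × V)) :=
  {R | R ∈ relsBtw ℛ X X ∧ cProd ℛ R S = {S}}

def stabRel (ℛ : Set (Set (V × V))) (X : Set V) (S : Set (V × V)) : SetRel V V :=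
  ⋃₀ stabRels ℛ X S

noncomputable def stabClass (ℛ : Set (Set (V × V))) (X : Set V) (S : Set (V × V)) (x : V) :
    Finset V :=
  {y | (x, y) ∈ stabRel ℛ X S}

theorem IsCC.mem_stabRels_iff (hCC : IsCC ℛ) (hX : IsFiber ℛ X) (hS : S ∈ relsBtw ℛ X Y) :
    R ∈ stabRels ℛ X S ↔
      R ∈ relsBtw ℛ X X ∧ ∀ u v, (u, v) ∈ R → ∀ y, (u, y) ∈ S ↔ (v, y) ∈ S :=
  and_congr_right fun hR =>
    (hCC.cProd_eq_singleton_iff hR.1 hS.1).trans (hCC.comp_eq_self_iff hX hR hS)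

theorem stabRel_subset : stabRel ℛ X S ⊆ X ×ˢ X :=
  Set.sUnion_subset fun _ hR => hR.1.2

theorem IsCC.mem_iff_of_mem_stabRel (hCC : IsCC ℛ) (hX : IsFiber ℛ X) (hS : S ∈ relsBtw ℛ X Y)
    {x x' : V} (h : (x, x') ∈ stabRel ℛ X S) (y : V) : (x, y) ∈ S ↔ (x', y) ∈ S := by
  obtain ⟨R, hR, hxx'⟩ := h
  exact ((hCC.mem_stabRels_iff hX hS).1 hR).2 x x' hxx' y

theorem IsCC.refl_stabRel (hCC : IsCC ℛ) (hX : IsFiber ℛ X) (hS : S ∈ relsBtw ℛ X Y) {x : V}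
    (hx : x ∈ X) : (x, x) ∈ stabRel ℛ X S := by
  refine ⟨diag X, (hCC.mem_stabRels_iff hX hS).2 ⟨⟨hX.2, ?_⟩, ?_⟩, hx, rfl⟩
  · rintro ⟨a, b⟩ ⟨ha, hab⟩
    exact ⟨ha, hab ▸ ha⟩
  · rintro u v ⟨-, huv⟩ y
    obtain rfl : u = v := huv
    rfl

theorem IsCC.symm_stabRel (hCC : IsCC ℛ) (hX : IsFiber ℛ X) (hS : S ∈ relsBtw ℛ X Y) {x y : V}
    (h : (x, y) ∈ stabRel ℛ X S) : (y, x) ∈ stabRel ℛ X S := by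
  obtain ⟨R, hR, hxy⟩ := h
  obtain ⟨⟨hRℛ, hRX⟩, hRS⟩ := (hCC.mem_stabRels_iff hX hS).1 hR
  refine ⟨transp R, (hCC.mem_stabRels_iff hX hS).2 ⟨⟨hCC.transp_mem hRℛ, ?_⟩, ?_⟩, hxy⟩
  · exact fun p hp => (hRX hp).symm
  · exact fun u v hvu w => (hRS v u hvu w).symm

theorem IsCC.trans_stabRel (hCC : IsCC ℛ) (hX : IsFiber ℛ X) (hS : S ∈ relsBtw ℛ X Y)
    {x y z : V} (hxy : (x, y) ∈ stabRel ℛ X S) (hyz : (y, z) ∈ stabRel ℛ X S) :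
    (x, z) ∈ stabRel ℛ X S := by
  obtain ⟨R₁, hR₁, hxy⟩ := hxy
  obtain ⟨R₂, hR₂, hyz⟩ := hyz
  rw [hCC.mem_stabRels_iff hX hS] at hR₁ hR₂
  obtain ⟨T, hT, hxz⟩ := hCC.exists_mem (x, z)
  have hTX := hCC.subset_prod_of_mem hX hX hT hxz (hR₁.1.2 hxy).1 (hR₂.1.2 hyz).2
  refine ⟨T, (hCC.mem_stabRels_iff hX hS).2 ⟨⟨hT, hTX⟩, fun u v huv w => ?_⟩, hxz⟩
  -- every pair of `T` factors through `R₁ ○ R₂`, as `(x, z)` does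
  obtain ⟨t, hut, htv⟩ :=
    hCC.mem_comp_of_mem hR₁.1.1 hR₂.1.1 hT hxz huv (prodMk_mem_comp hxy hyz)
  exact (hR₁.2 u t hut w).trans (hR₂.2 t v htv w)

theorem IsCC.card_stabClass (hCC : IsCC ℛ) (hX : IsFiber ℛ X) {x : V} (hx : x ∈ X) :
    #(stabClass ℛ X S x) = ∑ᶠ R ∈ stabRels ℛ X S, outDeg R := by
  have hfin := (stabRels ℛ X S).toFinite
  have hclass : stabClass ℛ X S x = hfin.toFinset.biUnion fun R => {y | (x, y) ∈ R} := by
    ext y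
    simp [stabClass, stabRel]
  rw [finsum_mem_eq_finite_toFinset_sum _ hfin, hclass, card_biUnion]
  · refine sum_congr rfl fun R hR => ?_
    exact (hCC.outDeg_eq_card hX (hfin.mem_toFinset.1 hR).1 hx).symm
  · intro R hR R' hR' hne
    refine disjoint_left.2 fun y hy hy' => hne ?_
    simp only [mem_filter_univ] at hy hy'
    exact (hCC.eq_iff_mem (hfin.mem_toFinset.1 hR).1.1 (hfin.mem_toFinset.1 hR').1.1 hy).2 hy'

theorem IsCC.stabClass_eq_iff (hCC : IsCC ℛ) (hX : IsFiber ℛ X) (hS : S ∈ relsBtw ℛ X Y)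
    {x y : V} (hx : x ∈ X) :
    stabClass ℛ X S y = stabClass ℛ X S x ↔ (x, y) ∈ stabRel ℛ X S := by
  constructor
  · intro h
    have hxx : x ∈ stabClass ℛ X S y := h ▸ (by simpa [stabClass] using hCC.refl_stabRel hX hS hx)
    simp only [stabClass, mem_filter_univ] at hxx
    exact hCC.symm_stabRel hX hS hxx
  · intro hxy
    ext z
    simp only [stabClass, mem_filter_univ]
    exact ⟨hCC.trans_stabRel hX hS hxy, hCC.trans_stabRel hX hS (hCC.symm_stabRel hX hS hxy)⟩

theorem IsCC.dvd_card_of_stabRel_closed (hCC : IsCC ℛ) (hX : IsFiber ℛ X)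
    (hS : S ∈ relsBtw ℛ X Y) {s : Finset V} (hsX : ∀ x ∈ s, x ∈ X)
    (hs : ∀ x ∈ s, ∀ y, (x, y) ∈ stabRel ℛ X S → y ∈ s) :
    (∑ᶠ R ∈ stabRels ℛ X S, outDeg R) ∣ #s := by
  refine dvd_card_of_card_fiber_eq (stabClass ℛ X S) fun x hx => ?_
  rw [← hCC.card_stabClass hX (hsX x hx)]
  congr 1
  ext y
  rw [mem_filter, hCC.stabClass_eq_iff hX hS (hsX x hx), stabClass, mem_filter_univ]
  exact and_iff_right_of_imp (hs x hx y)

end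

theorem dLS_dvd_gcd_general
    {V : Type*} [Fintype V]
    (ℛ : Set (Set (V × V))) (hCC : IsCC ℛ)
    (X Y : Set V) (hX : IsFiber ℛ X)
    (S : Set (V × V)) (hS : S ∈ relsBtw ℛ X Y) :
    (∑ᶠ R ∈ {R : Set (V × V) | R ∈ relsBtw ℛ X X ∧ cProd ℛ R S = {S}}, outDeg R) ∣
      Nat.gcd (Nat.card X) (inDeg S) := by
  obtain ⟨y, hy⟩ := exists_inDeg_eq_card (hCC.nonempty hS.1)
  refine Nat.dvd_gcd ?_ ?_
  · rw [Nat.card_eq_card_toFinset]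
    refine hCC.dvd_card_of_stabRel_closed hX hS (fun x hx => by simpa using hx) ?_
    exact fun x _ x' hxx' => by simpa using (stabRel_subset hxx').2
  · rw [hy]
    refine hCC.dvd_card_of_stabRel_closed hX hS (fun x hx => (hS.2 (by simpa using hx)).1) ?_
    intro x hx x' hxx'
    simpa [hCC.mem_iff_of_mem_stabRel hX hS hxx'] using hx

/-- **Theorem (Statement 10).** For `S ∈ ℛ_{X,Y}` and
`L_S = {R ∈ ℛ_X : RS = {S}}`, the number `d_{L_S} = Σ_{R ∈ L_S} d_R` divides
`gcd(|X|, e_S)`. -/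
theorem dLS_dvd_gcd
    {V : Type*} [Fintype V] [Nonempty V]
    (ℛ : Set (Set (V × V))) (hCC : IsCC ℛ)
    (X Y : Set V) (hX : IsFiber ℛ X) (hY : IsFiber ℛ Y)
    (S : Set (V × V)) (hS : S ∈ relsBtw ℛ X Y) :
    (∑ᶠ R ∈ {R : Set (V × V) | R ∈ relsBtw ℛ X X ∧ cProd ℛ R S = {S}}, outDeg R) ∣
      Nat.gcd (Nat.card X) (inDeg S) :=
  dLS_dvd_gcd_general ℛ hCC X Y hX S hS

end CCPaper
end

section
/- Let 𝒞 be a reduced (m,n,2)-scheme. If m − 1 is a prime power, then n = 1. -/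
open scoped Classical

namespace CCPaper

variable {V : Type*}

/-!
Take two distinct fibers `X` and `Y`. As `r = 2`, the off-diagonal pairs of `X` lie in a single
basis relation `T`, and `ℛ_{X,Y} = {R, S}`. Since `|X| = |Y| = m`, in- and out-degrees agree,
`d_R = k` and `d_S = m - k`, and reducedness gives `2 ≤ k ≤ m - 2`. Fix `x₀ ∈ X` and count the
pairs `(x, w)` with `x₀ ≠ x ∈ X` and `w ∈ R(x₀) ∩ R(x)` in two ways:
`(m - 1) c_{RRᵗ}^T = k (k - 1)`. As `k` and `k - 1` are coprime, the prime power `m - 1` divides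
one of them, which is impossible since `0 < k - 1 < k < m - 1`.
-/

open Finset

theorem _root_.IsPrimePow.le_of_dvd_mul_pred {q k : ℕ} (hq : IsPrimePow q) (hk : 2 ≤ k)
    (h : q ∣ k * (k - 1)) : q ≤ k := by
  have hcop : Nat.Coprime k (k - 1) := by
    simpa [Nat.sub_add_cancel (by omega : 1 ≤ k)] using
      Nat.coprime_self_add_left.mpr (Nat.coprime_one_left (k - 1))
  rcases (hcop.isPrimePow_dvd_mul hq).mp h with hd | hd
  · exact Nat.le_of_dvd (by omega) hd
  · exact (Nat.le_of_dvd (by omega) hd).trans (Nat.sub_le k 1)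

theorem _root_.Set.exists_eq_pair_of_ncard_eq_two {α : Type*} {s : Set α} {a : α}
    (hs : s.ncard = 2) (ha : a ∈ s) : ∃ b, a ≠ b ∧ s = {a, b} := by
  obtain ⟨x, y, hxy, rfl⟩ := Set.ncard_eq_two.mp hs
  rcases ha with rfl | rfl
  · exact ⟨y, hxy, rfl⟩
  · exact ⟨x, hxy.symm, Set.pair_comm _ _⟩

theorem card_setOf_eq_card_filter [Fintype V] (p : V → Prop) [DecidablePred p] :
    Nat.card {w | p w} = #{w | p w} := by
  simp [Nat.card_eq_fintype_card, Fintype.card_subtype]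

theorem iNum_diag_left {X : Set V} {R : Set (V × V)} {p : V × V} (hp : p ∈ R) :
    iNum (diag X) R p = if p.1 ∈ X then 1 else 0 := by
  have : {w | (p.1, w) ∈ diag X ∧ (w, p.2) ∈ R} = if p.1 ∈ X then {p.1} else ∅ := by
    ext w
    split_ifs <;> aesop (add simp diag)
  rw [iNum, this]
  split_ifs <;> simp

theorem iNum_diag_right {Y : Set V} {R : Set (V × V)} {p : V × V} (hp : p ∈ R) :
    iNum R (diag Y) p = if p.2 ∈ Y then 1 else 0 := by
  have : {w | (p.1, w) ∈ R ∧ (w, p.2) ∈ diag Y} = if p.2 ∈ Y then {p.2} else ∅ := by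
    ext w
    split_ifs <;> aesop (add simp diag)
  rw [iNum, this]
  split_ifs <;> simp

theorem iNum_self_transp (R : Set (V × V)) (x : V) :
    iNum R (transp R) (x, x) = Nat.card {y | (x, y) ∈ R} := by
  simp [iNum, transp]

theorem iNum_transp_self (R : Set (V × V)) (y : V) :
    iNum (transp R) R (y, y) = Nat.card {x | (x, y) ∈ R} := by
  simp [iNum, transp]

theorem outDeg_pos [Finite V] {R : Set (V × V)} (hR : R.Nonempty) : 0 < outDeg R := by
  rw [outDeg, dif_pos hR]
  exact Nat.card_pos_iff.mpr ⟨⟨⟨hR.choose.2, hR.choose_spec⟩⟩, inferInstance⟩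

section Coherent

variable [Fintype V] {ℛ : Set (Set (V × V))} {R S T : Set (V × V)} {X Y : Set V}

theorem IsCC.eq_of_mem_of_mem (hcc : IsCC ℛ) (hR : R ∈ ℛ) (hS : S ∈ ℛ) {p : V × V}
    (hpR : p ∈ R) (hpS : p ∈ S) : R = S :=
  (hcc.2.1 p).unique ⟨hR, hpR⟩ ⟨hS, hpS⟩

theorem IsCC.iNum_eq_sConst (hcc : IsCC ℛ) (hR : R ∈ ℛ) (hS : S ∈ ℛ) (hT : T ∈ ℛ)
    {p : V × V} (hp : p ∈ T) : iNum R S p = sConst R S T := by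
  have hne : T.Nonempty := ⟨p, hp⟩
  rw [sConst, dif_pos hne]
  exact hcc.2.2.2.2 R hR S hS T hT p hp _ hne.choose_spec

theorem IsCC.exists_fiber_mem (hcc : IsCC ℛ) (v : V) : ∃ X, IsFiber ℛ X ∧ v ∈ X := by
  obtain ⟨R, ⟨hR, hvR⟩, -⟩ := hcc.2.1 (v, v)
  have hdiag : ∀ p ∈ R, p.1 = p.2 := hcc.2.2.1 R hR ⟨(v, v), hvR, rfl⟩
  have hRX : diag {x | (x, x) ∈ R} = R := by
    ext ⟨a, b⟩
    constructor
    · rintro ⟨ha, hab⟩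
      obtain rfl : a = b := hab
      exact ha
    · intro hab
      obtain rfl : a = b := hdiag _ hab
      exact ⟨hab, rfl⟩
  exact ⟨_, ⟨⟨v, hvR⟩, hRX ▸ hR⟩, hvR⟩

theorem IsCC.exists_ne_fibers [Nonempty V] (hcc : IsCC ℛ)
    (h : Nat.card {X : Set V | IsFiber ℛ X} ≠ 1) :
    ∃ X, IsFiber ℛ X ∧ ∃ Y, IsFiber ℛ Y ∧ X ≠ Y := by
  obtain ⟨X, hX, -⟩ := hcc.exists_fiber_mem (Classical.arbitrary V)
  rw [Nat.card_coe_set_eq] at h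
  have hpos : 0 < {X : Set V | IsFiber ℛ X}.ncard := (Set.ncard_pos).mpr ⟨X, hX⟩
  exact (Set.one_lt_ncard (s := {X : Set V | IsFiber ℛ X})).mp (by omega)

theorem IsCC.fst_mem_of_mem (hcc : IsCC ℛ) (hR : R ∈ ℛ) (hX : IsFiber ℛ X) {p q : V × V}
    (hp : p ∈ R) (hq : q ∈ R) (hpX : p.1 ∈ X) : q.1 ∈ X := by
  have h := hcc.2.2.2.2 _ hX.2 R hR R hR p hp q hq
  rw [iNum_diag_left hp, iNum_diag_left hq, if_pos hpX] at h
  by_contra hqX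
  rw [if_neg hqX] at h
  exact one_ne_zero h

theorem IsCC.snd_mem_of_mem (hcc : IsCC ℛ) (hR : R ∈ ℛ) (hY : IsFiber ℛ Y) {p q : V × V}
    (hp : p ∈ R) (hq : q ∈ R) (hpY : p.2 ∈ Y) : q.2 ∈ Y := by
  have h := hcc.2.2.2.2 R hR _ hY.2 R hR p hp q hq
  rw [iNum_diag_right hp, iNum_diag_right hq, if_pos hpY] at h
  by_contra hqY
  rw [if_neg hqY] at h
  exact one_ne_zero h

theorem IsCC.exists_mem_relsBtw (hcc : IsCC ℛ) (hX : IsFiber ℛ X) (hY : IsFiber ℛ Y)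
    {p : V × V} (hpX : p.1 ∈ X) (hpY : p.2 ∈ Y) : ∃ R ∈ relsBtw ℛ X Y, p ∈ R := by
  obtain ⟨R, ⟨hR, hpR⟩, -⟩ := hcc.2.1 p
  exact ⟨R, ⟨hR, fun q hq => ⟨hcc.fst_mem_of_mem hR hX hpR hq hpX,
    hcc.snd_mem_of_mem hR hY hpR hq hpY⟩⟩, hpR⟩

theorem IsCC.card_out_eq_outDeg (hcc : IsCC ℛ) (hX : IsFiber ℛ X) (hR : R ∈ relsBtw ℛ X Y)
    {x : V} (hx : x ∈ X) : #{y | (x, y) ∈ R} = outDeg R := by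
  have hne : R.Nonempty := hcc.1 R hR.1
  rw [outDeg, dif_pos hne, ← card_setOf_eq_card_filter, ← iNum_self_transp,
    ← iNum_self_transp]
  exact hcc.2.2.2.2 R hR.1 _ (hcc.2.2.2.1 R hR.1) _ hX.2 _ ⟨hx, rfl⟩ _
    ⟨(hR.2 hne.choose_spec).1, rfl⟩

theorem IsCC.card_in_eq_inDeg (hcc : IsCC ℛ) (hY : IsFiber ℛ Y) (hR : R ∈ relsBtw ℛ X Y)
    {y : V} (hy : y ∈ Y) : #{x | (x, y) ∈ R} = inDeg R := by
  have hne : R.Nonempty := hcc.1 R hR.1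
  rw [inDeg, dif_pos hne, ← card_setOf_eq_card_filter, ← iNum_transp_self,
    ← iNum_transp_self]
  exact hcc.2.2.2.2 _ (hcc.2.2.2.1 R hR.1) R hR.1 _ hY.2 _ ⟨hy, rfl⟩ _
    ⟨(hR.2 hne.choose_spec).2, rfl⟩

theorem IsCC.ncard_mul_outDeg (hcc : IsCC ℛ) (hX : IsFiber ℛ X) (hY : IsFiber ℛ Y)
    (hR : R ∈ relsBtw ℛ X Y) : X.ncard * outDeg R = Y.ncard * inDeg R := by
  rw [Set.ncard_eq_toFinset_card', Set.ncard_eq_toFinset_card']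
  refine card_mul_eq_card_mul (fun x y => (x, y) ∈ R) (fun x hx => ?_) (fun y hy => ?_)
  · rw [← hcc.card_out_eq_outDeg hX hR (Set.mem_toFinset.mp hx)]
    congr 1
    ext y
    simpa [bipartiteAbove] using fun h => (hR.2 h).2
  · rw [← hcc.card_in_eq_inDeg hY hR (Set.mem_toFinset.mp hy)]
    congr 1
    ext x
    simpa [bipartiteBelow] using fun h => (hR.2 h).1

theorem IsCC.inDeg_eq_outDeg (hcc : IsCC ℛ) (hX : IsFiber ℛ X) (hY : IsFiber ℛ Y)
    (hXY : X.ncard = Y.ncard) (hR : R ∈ relsBtw ℛ X Y) : inDeg R = outDeg R := by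
  have hpos : 0 < X.ncard := (Set.ncard_pos).mpr hX.1
  have h := hcc.ncard_mul_outDeg hX hY hR
  rw [← hXY] at h
  exact (Nat.eq_of_mul_eq_mul_left hpos h).symm

theorem IsCC.outDeg_add_outDeg (hcc : IsCC ℛ) (hX : IsFiber ℛ X) (hY : IsFiber ℛ Y)
    (hRS : R ≠ S) (hpair : relsBtw ℛ X Y = {R, S}) : outDeg R + outDeg S = Y.ncard := by
  have hR : R ∈ relsBtw ℛ X Y := hpair ▸ Set.mem_insert R {S}
  have hS : S ∈ relsBtw ℛ X Y := hpair ▸ Set.mem_insert_of_mem R rfl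
  obtain ⟨x, hx⟩ := hX.1
  rw [← hcc.card_out_eq_outDeg hX hR hx, ← hcc.card_out_eq_outDeg hX hS hx,
    Set.ncard_eq_toFinset_card', ← card_filter_add_card_filter_not (s := Y.toFinset)
      (fun y => (x, y) ∈ R)]
  congr 2
  · ext y
    simpa using fun h => (hR.2 h).2
  · ext y
    simp only [mem_filter, mem_univ, true_and, Set.mem_toFinset]
    constructor
    · intro hxy
      exact ⟨(hS.2 hxy).2, fun hxy' => hRS (hcc.eq_of_mem_of_mem hR.1 hS.1 hxy' hxy)⟩
    · rintro ⟨hy, hxy⟩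
      obtain ⟨U, hU, hxyU⟩ := hcc.exists_mem_relsBtw hX hY (p := (x, y)) hx hy
      rw [hpair] at hU
      rcases hU with rfl | rfl
      · exact absurd hxyU hxy
      · exact hxyU

theorem IsCC.exists_offDiag_subset (hcc : IsCC ℛ) (hX : IsFiber ℛ X)
    (h2 : (relsBtw ℛ X X).ncard = 2) :
    ∃ T ∈ ℛ, ∀ a ∈ X, ∀ b ∈ X, a ≠ b → (a, b) ∈ T := by
  have hdiag : diag X ∈ relsBtw ℛ X X := ⟨hX.2, fun p hp => ⟨hp.1, hp.2 ▸ hp.1⟩⟩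
  obtain ⟨T, -, hpair⟩ := Set.exists_eq_pair_of_ncard_eq_two h2 hdiag
  have hT : T ∈ relsBtw ℛ X X := hpair ▸ Set.mem_insert_of_mem _ rfl
  refine ⟨T, hT.1, fun a ha b hb hab => ?_⟩
  obtain ⟨U, hU, habU⟩ := hcc.exists_mem_relsBtw hX hX (p := (a, b)) ha hb
  rw [hpair] at hU
  rcases hU with rfl | rfl
  · exact absurd habU.2 hab
  · exact habU

theorem IsCC.ncard_sub_one_dvd (hcc : IsCC ℛ) (hX : IsFiber ℛ X) (hY : IsFiber ℛ Y)
    (hT : T ∈ ℛ) (hoff : ∀ a ∈ X, ∀ b ∈ X, a ≠ b → (a, b) ∈ T) (hR : R ∈ relsBtw ℛ X Y) :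
    X.ncard - 1 ∣ outDeg R * (inDeg R - 1) := by
  obtain ⟨x₀, hx₀⟩ := hX.1
  have hcount := card_mul_eq_card_mul (s := X.toFinset.erase x₀) (t := {w | (x₀, w) ∈ R})
    (fun x w => (x, w) ∈ R) (m := sConst R (transp R) T) (n := inDeg R - 1)
    (fun x hx => ?_) (fun w hw => ?_)
  · rw [card_erase_of_mem (Set.mem_toFinset.mpr hx₀), ← Set.ncard_eq_toFinset_card',
      hcc.card_out_eq_outDeg hX hR hx₀] at hcount
    exact ⟨_, hcount.symm⟩
  · obtain ⟨hxx₀, hx⟩ := mem_erase.mp hx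
    rw [← hcc.iNum_eq_sConst hR.1 (hcc.2.2.2.1 R hR.1) hT
      (hoff x₀ hx₀ x (Set.mem_toFinset.mp hx) hxx₀.symm), iNum, card_setOf_eq_card_filter,
      bipartiteAbove, filter_filter]
    rfl
  · have hw : (x₀, w) ∈ R := (mem_filter.mp hw).2
    rw [← hcc.card_in_eq_inDeg hY hR (hR.2 hw).2, ← card_erase_of_mem (a := x₀)
      (mem_filter.mpr ⟨mem_univ _, hw⟩), bipartiteBelow, ← filter_erase]
    congr 1
    ext x
    simpa using fun h _ => (hR.2 h).1

theorem IsReduced.two_le_outDeg (hred : IsReduced ℛ) (hcc : IsCC ℛ) (hX : IsFiber ℛ X)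
    (hY : IsFiber ℛ Y) (hne : X ≠ Y) (hXY : X.ncard = Y.ncard) (hR : R ∈ relsBtw ℛ X Y) :
    2 ≤ outDeg R := by
  have hpos := outDeg_pos (hcc.1 R hR.1)
  have hthin : outDeg R ≠ 1 := fun h =>
    hred X Y hX hY hne R hR ⟨h, (hcc.inDeg_eq_outDeg hX hY hXY hR).trans h⟩
  omega

end Coherent

/-- **Theorem (Statement 16).** If `𝒞` is a reduced `(m,n,2)`-scheme and `m - 1` is a
prime power, then `n = 1`. -/
theorem reduced_mn2_prime_power
    {V : Type*} [Fintype V] [Nonempty V]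
    (ℛ : Set (Set (V × V))) (m n : ℕ) (h : IsMNRScheme ℛ m n 2) (hred : IsReduced ℛ)
    (hm : IsPrimePow (m - 1)) :
    n = 1 := by
  obtain ⟨hcc, hbal, hsize, rfl⟩ := h
  by_contra hn
  obtain ⟨X, hX, Y, hY, hne⟩ := hcc.exists_ne_fibers hn
  have hrank {X Y : Set V} (hX : IsFiber ℛ X) (hY : IsFiber ℛ Y) :
      (relsBtw ℛ X Y).ncard = 2 := by
    rw [← Nat.card_coe_set_eq]
    exact hbal X Y hX hY
  have hXm : X.ncard = m := by rw [← Nat.card_coe_set_eq]; exact hsize X hX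
  have hXY : X.ncard = Y.ncard := by
    rw [hXm, ← Nat.card_coe_set_eq]
    exact (hsize Y hY).symm
  obtain ⟨R, S, hRS, hpair⟩ := Set.ncard_eq_two.mp (hrank hX hY)
  have hR : R ∈ relsBtw ℛ X Y := hpair ▸ Set.mem_insert R {S}
  have hS : S ∈ relsBtw ℛ X Y := hpair ▸ Set.mem_insert_of_mem R rfl
  have hsum := hcc.outDeg_add_outDeg hX hY hRS hpair
  have hRdeg := hred.two_le_outDeg hcc hX hY hne hXY hR
  have hSdeg := hred.two_le_outDeg hcc hX hY hne hXY hS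
  obtain ⟨T, hT, hoff⟩ := hcc.exists_offDiag_subset hX (hrank hX hX)
  have hdvd := hcc.ncard_sub_one_dvd hX hY hT hoff hR
  rw [hcc.inDeg_eq_outDeg hX hY hXY hR, hXm] at hdvd
  have := hm.le_of_dvd_mul_pred hRdeg hdvd
  omega

end CCPaper
end
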